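/- Let μ be a Borel measure on ℝⁿ finite on bounded sets and θ ∈ S^{n-1}. Then for μ-almost every x, limsup_{r↓0} log μ(B(x,r) \ H(x,θ)) / log r equals the upper local dimension limsup_{r↓0} log μ(B(x,r)) / log r, and the corresponding equality holds with liminf in place of limsup for the lower local dimension. -/

import Mathlib

/-!
Write `H x` for the closed half-space `{y | ⟪y, θ⟫ ≤ ⟪x, θ⟫}`. Call `x` bad at scale `ρ` for the
constant `c` if `μ (B(x, ρ) ∩ H x) < c μ (B(x, ρ/2))`. Cover the bad points `S` by the balls
`B(z, ρ/2)` centred at a maximal `ρ/2`-separated subset of `S`; inside one such ball, a point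
`y ∈ S` that is (nearly) highest in the direction `θ` sees the whole piece below it in its
half-ball, so that piece has measure at most `c μ (B(z, ρ))`. The balls `B(z, ρ)` overlap at most
`5ⁿ` times, whence `μ S ≤ 5ⁿ c μ(ρ-neighbourhood of S)`. Taking `c = 1/(k+1)²` at scale `2^{-k-1}`,
Borel–Cantelli shows that for a.e. `x` and every `ε > 0`, eventually
`r^ε μ(B(x, r/4)) ≤ μ(B(x, r) ∩ H x) ≤ μ(B(x, r))`. Such a loss of `r^ε` (together with the
rescaling `r ↦ r/4`) moves the exponents `log μ / log r` by at most `ε`.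
-/

open Set MeasureTheory Metric Filter
open scoped ENNReal NNReal RealInnerProductSpace Topology Finset

/-- No boundedness is assumed: if `S` is unbounded below then so is `T`, and both infima are the
junk value `0`. -/
theorem Real.sInf_eq_of_subset_of_forall_add_mem {S T : Set ℝ} (hTS : T ⊆ S)
    (h : ∀ ε > 0, ∀ a ∈ S, a + ε ∈ T) : sInf T = sInf S := by
  rcases S.eq_empty_or_nonempty with rfl | ⟨a₀, ha₀⟩
  · rw [subset_empty_iff.1 hTS]
  by_cases hS : BddBelow S
  · refine le_antisymm (le_of_forall_pos_le_add fun ε hε => ?_)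
      (csInf_le_csInf hS ⟨a₀ + 1, h 1 one_pos a₀ ha₀⟩ hTS)
    have : sInf T - ε ≤ sInf S :=
      le_csInf ⟨a₀, ha₀⟩ fun a ha => sub_le_iff_le_add.2 (csInf_le (hS.mono hTS) (h ε hε a ha))
    linarith
  · have hT : ¬BddBelow T := fun ⟨b, hb⟩ =>
      hS ⟨b - 1, fun a ha => by linarith [hb (h 1 one_pos a ha)]⟩
    rw [Real.sInf_of_not_bddBelow hS, Real.sInf_of_not_bddBelow hT]

theorem Real.sSup_eq_of_subset_of_forall_sub_mem {S T : Set ℝ} (hTS : T ⊆ S)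
    (h : ∀ ε > 0, ∀ a ∈ S, a - ε ∈ T) : sSup T = sSup S := by
  have key : sInf (-T) = sInf (-S) :=
    Real.sInf_eq_of_subset_of_forall_add_mem (neg_subset_neg.2 hTS) fun ε hε a ha => by
      simpa [neg_add_eq_sub] using h ε hε (-a) ha
  rw [Real.sInf_neg, Real.sInf_neg, neg_inj] at key
  exact key

namespace Filter

variable {α : Type*} {l : Filter α} {f g : α → ℝ}

theorem limsup_eq_of_le_of_forall_le_add (hfg : f ≤ᶠ[l] g)
    (h : ∀ ε > (0 : ℝ), ∀ a, (∀ᶠ x in l, f x ≤ a) → ∀ᶠ x in l, g x ≤ a + ε) :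
    limsup g l = limsup f l := by
  rw [limsup_eq, limsup_eq]
  exact Real.sInf_eq_of_subset_of_forall_add_mem
    (fun a ha => (hfg.and ha).mono fun x hx => hx.1.trans hx.2) h

theorem liminf_eq_of_le_of_forall_sub_le (hfg : f ≤ᶠ[l] g)
    (h : ∀ ε > (0 : ℝ), ∀ a, (∀ᶠ x in l, a ≤ g x) → ∀ᶠ x in l, a - ε ≤ f x) :
    liminf f l = liminf g l := by
  rw [liminf_eq, liminf_eq]
  exact Real.sSup_eq_of_subset_of_forall_sub_mem
    (fun a ha => (hfg.and ha).mono fun x hx => hx.2.trans hx.1) h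

end Filter

theorem eventually_rpow_lt_nhdsGT_zero {δ b : ℝ} (hδ : 0 < δ) (hb : 0 < b) :
    ∀ᶠ r in 𝓝[>] (0 : ℝ), r ^ δ < b := by
  have h : Tendsto (fun r : ℝ => r ^ δ) (𝓝[>] 0) (𝓝 0) := by
    simpa [Real.zero_rpow hδ.ne'] using
      (Real.continuousAt_rpow_const 0 δ (.inr hδ.le)).tendsto.mono_left nhdsWithin_le_nhds
  exact h.eventually (gt_mem_nhds hb)

section LogRatio

variable {m M : ℝ → ℝ} {c : ℝ}

theorem eventually_logb_le_iff {f : ℝ → ℝ} (hf : ∀ᶠ r in 𝓝[>] 0, 0 < f r) (a : ℝ) :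
    (∀ᶠ r in 𝓝[>] 0, Real.logb r (f r) ≤ a) ↔ ∀ᶠ r in 𝓝[>] 0, r ^ a ≤ f r := by
  refine eventually_congr ?_
  filter_upwards [hf, Ioo_mem_nhdsGT one_pos] with r hfr hr
  exact Real.logb_le_iff_le_rpow_of_base_lt_one hr.1 hr.2 hfr

theorem eventually_le_logb_iff {f : ℝ → ℝ} (hf : ∀ᶠ r in 𝓝[>] 0, 0 < f r) (a : ℝ) :
    (∀ᶠ r in 𝓝[>] 0, a ≤ Real.logb r (f r)) ↔ ∀ᶠ r in 𝓝[>] 0, f r ≤ r ^ a := by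
  refine eventually_congr ?_
  filter_upwards [hf, Ioo_mem_nhdsGT one_pos] with r hfr hr
  exact Real.le_logb_iff_rpow_le_of_base_lt_one hr.1 hr.2 hfr

theorem eventually_logb_le_logb_of_le (hm : ∀ᶠ r in 𝓝[>] 0, 0 < m r)
    (hmM : ∀ᶠ r in 𝓝[>] 0, m r ≤ M r) :
    ∀ᶠ r in 𝓝[>] 0, Real.logb r (M r) ≤ Real.logb r (m r) := by
  filter_upwards [hm, hmM, Ioo_mem_nhdsGT one_pos] with r hmr hmMr hr
  exact (Real.logb_le_logb_of_base_lt_one hr.1 hr.2 (hmr.trans_le hmMr) hmr).2 hmMr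

theorem limsup_logb_eq_of_rpow_le (hm : ∀ᶠ r in 𝓝[>] 0, 0 < m r)
    (hmM : ∀ᶠ r in 𝓝[>] 0, m r ≤ M r)
    (h : ∀ ε > (0 : ℝ), ∀ a, (∀ᶠ r in 𝓝[>] 0, r ^ a ≤ M r) → ∀ᶠ r in 𝓝[>] 0, r ^ (a + ε) ≤ m r) :
    limsup (fun r => Real.logb r (m r)) (𝓝[>] 0) =
      limsup (fun r => Real.logb r (M r)) (𝓝[>] 0) := by
  have hM : ∀ᶠ r in 𝓝[>] 0, 0 < M r := (hm.and hmM).mono fun r h => h.1.trans_le h.2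
  refine limsup_eq_of_le_of_forall_le_add (eventually_logb_le_logb_of_le hm hmM)
    fun ε hε a ha => ?_
  rw [eventually_logb_le_iff hm]
  exact h ε hε a ((eventually_logb_le_iff hM a).1 ha)

theorem liminf_logb_eq_of_le_rpow (hm : ∀ᶠ r in 𝓝[>] 0, 0 < m r)
    (hmM : ∀ᶠ r in 𝓝[>] 0, m r ≤ M r)
    (h : ∀ ε > (0 : ℝ), ∀ a, (∀ᶠ r in 𝓝[>] 0, m r ≤ r ^ a) → ∀ᶠ r in 𝓝[>] 0, M r ≤ r ^ (a - ε)) :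
    liminf (fun r => Real.logb r (m r)) (𝓝[>] 0) =
      liminf (fun r => Real.logb r (M r)) (𝓝[>] 0) := by
  have hM : ∀ᶠ r in 𝓝[>] 0, 0 < M r := (hm.and hmM).mono fun r h => h.1.trans_le h.2
  refine (liminf_eq_of_le_of_forall_sub_le (eventually_logb_le_logb_of_le hm hmM)
    fun ε hε a ha => ?_).symm
  rw [eventually_le_logb_iff hM]
  exact h ε hε a ((eventually_le_logb_iff hm a).1 ha)

theorem eventually_rpow_add_le_of_rpow_le (hc : 0 < c)
    (hd : ∀ ε > (0 : ℝ), ∀ᶠ r in 𝓝[>] 0, r ^ ε * M (c * r) ≤ m r) {ε : ℝ} (hε : 0 < ε) {a : ℝ}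
    (ha : ∀ᶠ r in 𝓝[>] 0, r ^ a ≤ M r) : ∀ᶠ r in 𝓝[>] 0, r ^ (a + ε) ≤ m r := by
  filter_upwards [hd (ε / 2) (half_pos hε), eventually_nhdsGT_zero_mul_left hc ha,
    eventually_rpow_lt_nhdsGT_zero (half_pos hε) (Real.rpow_pos_of_pos hc a), self_mem_nhdsWithin]
    with r hdr har hsmall (hr : 0 < r)
  calc r ^ (a + ε) = r ^ (ε / 2) * (r ^ (ε / 2) * r ^ a) := by
        rw [← Real.rpow_add hr, ← Real.rpow_add hr]; ring_nf
    _ ≤ r ^ (ε / 2) * (c ^ a * r ^ a) := by gcongr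
    _ = r ^ (ε / 2) * (c * r) ^ a := by rw [Real.mul_rpow hc.le hr.le]
    _ ≤ r ^ (ε / 2) * M (c * r) := by gcongr
    _ ≤ m r := hdr

theorem eventually_le_rpow_sub_of_le_rpow (hc : 0 < c)
    (hd : ∀ ε > (0 : ℝ), ∀ᶠ r in 𝓝[>] 0, r ^ ε * M (c * r) ≤ m r) {ε : ℝ} (hε : 0 < ε) {a : ℝ}
    (ha : ∀ᶠ r in 𝓝[>] 0, m r ≤ r ^ a) : ∀ᶠ r in 𝓝[>] 0, M r ≤ r ^ (a - ε) := by
  have hc' : 0 < c⁻¹ := inv_pos.2 hc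
  have hK : 0 < c⁻¹ ^ (a - ε / 2) := Real.rpow_pos_of_pos hc' _
  filter_upwards [eventually_nhdsGT_zero_mul_left hc' (hd (ε / 2) (half_pos hε)),
    eventually_nhdsGT_zero_mul_left hc' ha,
    eventually_rpow_lt_nhdsGT_zero (half_pos hε) (inv_pos.2 hK), self_mem_nhdsWithin]
    with r hdr har hsmall (hr : 0 < r)
  rw [mul_inv_cancel_left₀ hc.ne'] at hdr
  have hcr : 0 < c⁻¹ * r := mul_pos hc' hr
  have hMr : M r ≤ (c⁻¹ * r) ^ (a - ε / 2) := by
    refine le_of_mul_le_mul_left ?_ (Real.rpow_pos_of_pos hcr (ε / 2))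
    rw [← Real.rpow_add hcr, add_sub_cancel]
    exact hdr.trans har
  calc M r ≤ (c⁻¹ * r) ^ (a - ε / 2) := hMr
    _ = (c⁻¹ ^ (a - ε / 2) * r ^ (ε / 2)) * r ^ (a - ε) := by
        rw [Real.mul_rpow hc'.le hr.le, mul_assoc, ← Real.rpow_add hr]; ring_nf
    _ ≤ r ^ (a - ε) := by
        refine mul_le_of_le_one_left (Real.rpow_nonneg hr.le _) ?_
        exact (mul_le_mul_of_nonneg_left hsmall.le hK.le).trans (mul_inv_cancel₀ hK.ne').le

theorem limsup_logb_eq_and_liminf_logb_eq_of_rpow_mul_le (hc : 0 < c)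
    (hM : ∀ᶠ r in 𝓝[>] 0, 0 < M r) (hmM : ∀ᶠ r in 𝓝[>] 0, m r ≤ M r)
    (hd : ∀ ε > (0 : ℝ), ∀ᶠ r in 𝓝[>] 0, r ^ ε * M (c * r) ≤ m r) :
    limsup (fun r => Real.logb r (m r)) (𝓝[>] 0) =
        limsup (fun r => Real.logb r (M r)) (𝓝[>] 0) ∧
      liminf (fun r => Real.logb r (m r)) (𝓝[>] 0) =
      liminf (fun r => Real.logb r (M r)) (𝓝[>] 0) := by
  have hm : ∀ᶠ r in 𝓝[>] 0, 0 < m r := by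
    filter_upwards [hd 1 one_pos, eventually_nhdsGT_zero_mul_left hc hM, self_mem_nhdsWithin]
      with r hdr hMr (hr : 0 < r)
    exact (mul_pos (Real.rpow_pos_of_pos hr 1) hMr).trans_le hdr
  exact ⟨limsup_logb_eq_of_rpow_le hm hmM fun ε hε a =>
      eventually_rpow_add_le_of_rpow_le hc hd hε,
    liminf_logb_eq_of_le_rpow hm hmM fun ε hε a => eventually_le_rpow_sub_of_le_rpow hc hd hε⟩

end LogRatio

theorem MeasureTheory.measure_le_of_forall_measure_inter_le {α : Type*} [MeasurableSpace α]
    (μ : Measure α) {φ : α → ℝ} {T : Set α} (hT : BddAbove (φ '' T)) {a : ℝ≥0∞}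
    (h : ∀ y ∈ T, μ (T ∩ {z | φ z ≤ φ y}) ≤ a) : μ T ≤ a := by
  rcases T.eq_empty_or_nonempty with rfl | hTne
  · simp
  by_cases hmax : sSup (φ '' T) ∈ φ '' T
  · obtain ⟨y, hy, hys⟩ := hmax
    have : T ∩ {z | φ z ≤ φ y} = T :=
      inter_eq_left.2 fun z hz => hys ▸ le_csSup hT (mem_image_of_mem φ hz)
    exact this ▸ h y hy
  obtain ⟨u, hu_mono, hu_lim, hu_mem⟩ := exists_seq_tendsto_sSup (hTne.image φ) hT
  have hT_eq : T = ⋃ k, T ∩ {z | φ z ≤ u k} := by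
    refine Subset.antisymm (fun z hz => ?_) (iUnion_subset fun k => inter_subset_left)
    have hlt : φ z < sSup (φ '' T) := (le_csSup hT (mem_image_of_mem φ hz)).lt_of_ne
      fun heq => hmax (heq ▸ mem_image_of_mem φ hz)
    obtain ⟨k, hk⟩ := (hu_lim.eventually (lt_mem_nhds hlt)).exists
    exact mem_iUnion.2 ⟨k, hz, hk.le⟩
  have hmono : Monotone fun k => T ∩ {z | φ z ≤ u k} := fun j k hjk =>
    inter_subset_inter_right _ fun z hz => (show φ z ≤ u j from hz).trans (hu_mono hjk)
  rw [hT_eq, hmono.measure_iUnion]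
  refine iSup_le fun k => ?_
  obtain ⟨y, hy, hyk⟩ := hu_mem k
  exact hyk ▸ h y hy

open scoped Classical in
theorem MeasureTheory.sum_measure_le_mul_measure_biUnion {α ι : Type*} [MeasurableSpace α]
    (μ : Measure α) (I : Finset ι) {s : ι → Set α} (hs : ∀ i ∈ I, MeasurableSet (s i)) {K : ℕ}
    (hK : ∀ w, #{i ∈ I | w ∈ s i} ≤ K) :
    ∑ i ∈ I, μ (s i) ≤ K * μ (⋃ i ∈ I, s i) := by
  have hU : MeasurableSet (⋃ i ∈ I, s i) := Finset.measurableSet_biUnion I hs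
  have hpt : ∀ w, ∑ i ∈ I, (s i).indicator 1 w ≤ (K : ℝ≥0∞) * (⋃ i ∈ I, s i).indicator 1 w := by
    intro w
    by_cases hw : w ∈ ⋃ i ∈ I, s i
    · simp only [indicator_apply, Pi.one_apply, Finset.sum_boole, hw, if_true, mul_one]
      exact_mod_cast hK w
    · rw [indicator_of_notMem hw, mul_zero]
      refine (Finset.sum_eq_zero fun i hi => indicator_of_notMem (fun hwi => hw ?_) _).le
      exact mem_biUnion hi hwi
  calc ∑ i ∈ I, μ (s i) = ∫⁻ w, ∑ i ∈ I, (s i).indicator 1 w ∂μ := by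
        rw [lintegral_finsetSum' _ fun i hi => (measurable_one.indicator (hs i hi)).aemeasurable]
        exact Finset.sum_congr rfl fun i hi => (lintegral_indicator_one (hs i hi)).symm
    _ ≤ ∫⁻ w, (K : ℝ≥0∞) * (⋃ i ∈ I, s i).indicator 1 w ∂μ := lintegral_mono hpt
    _ = K * μ (⋃ i ∈ I, s i) := by
        rw [lintegral_const_mul _ (measurable_one.indicator hU), lintegral_indicator_one hU]

theorem Metric.exists_finite_pairwise_lt_dist_subset_iUnion_closedBall {X : Type*}
    [MetricSpace X] [ProperSpace X] {S : Set X} (hS : Bornology.IsBounded S) {η : ℝ} (hη : 0 < η) :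
    ∃ N ⊆ S, N.Finite ∧ N.Pairwise (fun x y => η < dist x y) ∧ S ⊆ ⋃ x ∈ N, closedBall x η := by
  lift η to ℝ≥0 using hη.le
  obtain ⟨C, -, hCfin, hC⟩ := exists_finite_isCover_of_totallyBounded (ε := η / 2)
    (div_pos (by exact_mod_cast hη) two_pos).ne'
    (hS.isCompact_closure.totallyBounded.subset subset_closure)
  have hpack : packingNumber η S ≠ ⊤ := by
    refine ne_top_of_le_ne_top hCfin.encard_lt_top.ne ?_
    calc packingNumber η S = packingNumber (2 * (η / 2)) S := by rw [mul_div_cancel₀ _ two_ne_zero]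
      _ ≤ externalCoveringNumber (η / 2) S := packingNumber_two_mul_le_externalCoveringNumber _ _
      _ ≤ C.encard := hC.externalCoveringNumber_le_encard
  refine ⟨maximalSeparatedSet η S, maximalSeparatedSet_subset,
    Set.encard_ne_top_iff.1 ((encard_maximalSeparatedSet hpack).trans_ne hpack),
    fun x hx y hy hxy => ?_,
    isCover_iff_subset_iUnion_closedBall.1 (isCover_maximalSeparatedSet hpack)⟩
  have h : (η : ℝ≥0∞) < edist x y := isSeparated_maximalSeparatedSet hx hy hxy
  rw [edist_dist, ← ENNReal.ofReal_coe_nnreal, ENNReal.ofReal_lt_ofReal_iff'] at h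
  exact h.1

theorem eventually_pow_le_inv_sq {q : ℝ} (hq0 : 0 < q) (hq1 : q < 1) :
    ∀ᶠ n : ℕ in atTop, q ^ n ≤ (((n : ℝ) + 1) ^ 2)⁻¹ := by
  have h := (tendsto_pow_const_mul_const_pow_of_abs_lt_one 2
    (abs_lt.2 ⟨by linarith, hq1⟩)).comp (tendsto_add_atTop_nat 1)
  filter_upwards [h.eventually (gt_mem_nhds hq0)] with n hn
  simp only [Function.comp_apply, Nat.cast_add, Nat.cast_one, pow_succ] at hn
  rw [le_inv_comm₀ (by positivity) (by positivity), ← one_div, le_div_iff₀ (by positivity)]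
  nlinarith

theorem eventually_nhdsGT_zero_of_eventually_Ioc_pow {q : ℝ} (hq0 : 0 < q) (hq1 : q < 1)
    {p : ℝ → Prop} (h : ∀ᶠ n : ℕ in atTop, ∀ r ∈ Ioc (q ^ (n + 1)) (q ^ n), p r) :
    ∀ᶠ r in 𝓝[>] 0, p r := by
  obtain ⟨N, hN⟩ := eventually_atTop.1 h
  filter_upwards [Ioo_mem_nhdsGT (pow_pos hq0 N)] with r hr
  obtain ⟨n, hn1, hn⟩ := exists_nat_pow_near_of_lt_one hr.1
    (hr.2.le.trans (pow_le_one₀ hq0.le hq1.le)) hq0 hq1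
  refine hN n ?_ r ⟨hn1, hn⟩
  have := (pow_lt_pow_iff_right_of_lt_one₀ hq0 hq1).1 (hn1.trans hr.2)
  omega

theorem ENNReal.tsum_ofReal_inv_add_one_sq_ne_top :
    ∑' k : ℕ, ENNReal.ofReal (((k : ℝ) + 1) ^ 2)⁻¹ ≠ ⊤ := by
  have hs : Summable fun k : ℕ => (((k : ℝ) + 1) ^ 2)⁻¹ := by
    simpa using (summable_nat_add_iff 1).2 (Real.summable_nat_pow_inv.2 (by norm_num : 1 < 2))
  rw [← ENNReal.ofReal_tsum_of_nonneg (fun k => by positivity) hs]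
  exact ENNReal.ofReal_ne_top

section FiniteDimensional

variable {E : Type*} [NormedAddCommGroup E] [NormedSpace ℝ E] [FiniteDimensional ℝ E]

open scoped Classical in
theorem card_filter_mem_closedBall_le_of_pairwise_lt_dist {N : Finset E} {ρ : ℝ} (hρ : 0 < ρ)
    (hN : (N : Set E).Pairwise fun x y => ρ / 2 < dist x y) (w : E) :
    #{x ∈ N | w ∈ closedBall x ρ} ≤ 5 ^ Module.finrank ℝ E := by
  set f : E → E := fun x => (2 / ρ) • (x - w)
  have hρ' : 0 < 2 / ρ := div_pos two_pos hρ
  have hf : Function.Injective f := fun x y hxy => by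
    simpa [f, smul_right_inj hρ'.ne'] using hxy
  have hnorm : ∀ x y, ‖f x - f y‖ = 2 / ρ * dist x y := fun x y => by
    rw [← smul_sub, sub_sub_sub_cancel_right, norm_smul, Real.norm_of_nonneg hρ'.le, dist_eq_norm]
  rw [← Finset.card_image_of_injective _ hf]
  refine Besicovitch.card_le_of_separated _ (fun c hc => ?_) fun c hc d hd hcd => ?_
  · obtain ⟨x, hx, rfl⟩ := Finset.mem_image.1 hc
    have hxw : dist x w ≤ ρ := by simpa [dist_comm] using (Finset.mem_filter.1 hx).2
    calc ‖f x‖ = ‖f x - f w‖ := by simp [f]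
      _ = 2 / ρ * dist x w := hnorm x w
      _ ≤ 2 / ρ * ρ := by gcongr
      _ = 2 := div_mul_cancel₀ _ hρ.ne'
  · obtain ⟨x, hx, rfl⟩ := Finset.mem_image.1 hc
    obtain ⟨y, hy, rfl⟩ := Finset.mem_image.1 hd
    have hxy : x ≠ y := fun h => hcd (h ▸ rfl)
    have := hN (Finset.mem_filter.1 hx).1 (Finset.mem_filter.1 hy).1 hxy
    calc (1 : ℝ) = 2 / ρ * (ρ / 2) := by field_simp
      _ ≤ 2 / ρ * dist x y := by gcongr
      _ = ‖f x - f y‖ := (hnorm x y).symm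

theorem measure_le_of_forall_measure_closedBall_inter_le [MeasurableSpace E] [BorelSpace E]
    (μ : Measure E) {φ : E → ℝ} (hφ : Continuous φ) {ρ : ℝ} (hρ : 0 < ρ) {c : ℝ≥0∞} {S : Set E}
    (hS : Bornology.IsBounded S)
    (h : ∀ x ∈ S, μ (closedBall x ρ ∩ {y | φ y ≤ φ x}) ≤ c * μ (closedBall x (ρ / 2))) :
    μ S ≤ 5 ^ Module.finrank ℝ E * c * μ (cthickening ρ S) := by
  obtain ⟨N, hNS, hNfin, hNsep, hcov⟩ :=
    exists_finite_pairwise_lt_dist_subset_iUnion_closedBall hS (half_pos hρ)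
  lift N to Finset E using hNfin
  have hlocal : ∀ x ∈ N, μ (S ∩ closedBall x (ρ / 2)) ≤ c * μ (closedBall x ρ) := by
    intro x _
    refine measure_le_of_forall_measure_inter_le μ (((isCompact_closedBall x (ρ / 2)).bddAbove_image
      hφ.continuousOn).mono (image_mono inter_subset_right)) fun y hy => ?_
    have hyx : dist y x ≤ ρ / 2 := hy.2
    calc μ (S ∩ closedBall x (ρ / 2) ∩ {z | φ z ≤ φ y})
        ≤ μ (closedBall y ρ ∩ {z | φ z ≤ φ y}) := by
          refine measure_mono (inter_subset_inter_left _ fun z hz => ?_)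
          have hzx : dist z x ≤ ρ / 2 := hz.2
          exact (dist_triangle_right z y x).trans (by linarith)
      _ ≤ c * μ (closedBall y (ρ / 2)) := h y hy.1
      _ ≤ c * μ (closedBall x ρ) := by
          gcongr
          exact closedBall_subset_closedBall' (by linarith)
  have hsum : ∑ x ∈ N, μ (closedBall x ρ) ≤ 5 ^ Module.finrank ℝ E * μ (cthickening ρ S) := by
    have := sum_measure_le_mul_measure_biUnion μ N (fun x _ => measurableSet_closedBall)
      (card_filter_mem_closedBall_le_of_pairwise_lt_dist hρ hNsep)
    push_cast at this
    refine this.trans ?_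
    gcongr
    exact iUnion₂_subset fun x hx => closedBall_subset_cthickening (hNS hx) ρ
  calc μ S ≤ μ (⋃ x ∈ N, S ∩ closedBall x (ρ / 2)) := by
        refine measure_mono fun z hz => ?_
        obtain ⟨x, hx, hzx⟩ := mem_iUnion₂.1 (hcov hz)
        exact mem_iUnion₂.2 ⟨x, hx, hz, hzx⟩
    _ ≤ ∑ x ∈ N, μ (S ∩ closedBall x (ρ / 2)) := measure_biUnion_finset_le _ _
    _ ≤ ∑ x ∈ N, c * μ (closedBall x ρ) := Finset.sum_le_sum hlocal
    _ = c * ∑ x ∈ N, μ (closedBall x ρ) := (Finset.mul_sum _ _ _).symm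
    _ ≤ c * (5 ^ Module.finrank ℝ E * μ (cthickening ρ S)) := by gcongr
    _ = 5 ^ Module.finrank ℝ E * c * μ (cthickening ρ S) := by ring

theorem measure_setOf_measure_closedBall_inter_lt_le [MeasurableSpace E] [BorelSpace E]
    (μ : Measure E) {φ : E → ℝ} (hφ : Continuous φ) {ρ : ℝ} (hρ : 0 < ρ) (c : ℝ≥0∞) {R : ℝ}
    (hR : 0 ≤ R) :
    μ {x ∈ closedBall 0 R | μ (closedBall x ρ ∩ {y | φ y ≤ φ x}) < c * μ (closedBall x (ρ / 2))}
      ≤ 5 ^ Module.finrank ℝ E * c * μ (closedBall 0 (R + ρ)) := by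
  refine (measure_le_of_forall_measure_closedBall_inter_le μ hφ hρ
    (isBounded_closedBall.subset fun x hx => hx.1) fun x hx => hx.2.le).trans ?_
  gcongr
  refine (cthickening_subset_of_subset _ fun x hx => hx.1).trans ?_
  rw [cthickening_closedBall hρ.le hR, add_comm]

theorem ae_eventually_rpow_mul_measure_closedBall_le [MeasurableSpace E] [BorelSpace E]
    (μ : Measure E) [IsFiniteMeasureOnCompacts μ] {φ : E → ℝ} (hφ : Continuous φ) :
    ∀ᵐ x ∂μ, ∀ ε > (0 : ℝ), ∀ᶠ r in 𝓝[>] 0,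
      ENNReal.ofReal (r ^ ε) * μ (closedBall x (r / 4)) ≤ μ (closedBall x r ∩ {y | φ y ≤ φ x}) := by
  set c : ℕ → ℝ≥0∞ := fun k => ENNReal.ofReal (((k : ℝ) + 1) ^ 2)⁻¹
  set ρ : ℕ → ℝ := fun k => (1 / 2) ^ (k + 1)
  have hρ : ∀ k, 0 < ρ k := fun k => by positivity
  have hρ1 : ∀ k, ρ k ≤ 1 := fun k => pow_le_one₀ (by norm_num) (by norm_num)
  set A : ℕ → ℕ → Set E := fun R k => {x ∈ closedBall 0 R |
    μ (closedBall x (ρ k) ∩ {y | φ y ≤ φ x}) < c k * μ (closedBall x (ρ k / 2))}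
  have hA : ∀ R : ℕ, μ (limsup (A R) atTop) = 0 := by
    intro R
    have hAk : ∀ k, μ (A R k) ≤ 5 ^ Module.finrank ℝ E * μ (closedBall 0 (R + 1)) * c k := by
      intro k
      calc μ (A R k) ≤ 5 ^ Module.finrank ℝ E * c k * μ (closedBall 0 (R + ρ k)) :=
            measure_setOf_measure_closedBall_inter_lt_le μ hφ (hρ k) (c k) R.cast_nonneg
        _ ≤ 5 ^ Module.finrank ℝ E * c k * μ (closedBall 0 (R + 1)) := by
            gcongr
            exact hρ1 k
        _ = 5 ^ Module.finrank ℝ E * μ (closedBall 0 (R + 1)) * c k := by ring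
    refine measure_limsup_atTop_eq_zero (ne_top_of_le_ne_top ?_ (ENNReal.tsum_le_tsum hAk))
    rw [ENNReal.tsum_mul_left]
    exact ENNReal.mul_ne_top (ENNReal.mul_ne_top (by simp) measure_closedBall_lt_top.ne)
      ENNReal.tsum_ofReal_inv_add_one_sq_ne_top
  filter_upwards [measure_eq_zero_iff_ae_notMem.1 (measure_iUnion_null hA)] with x hx ε hε
  obtain ⟨R, hR⟩ := exists_nat_ge ‖x‖
  have hxA : ∀ᶠ k in atTop, x ∉ A R k := by
    have : x ∉ limsup (A R) atTop := fun h => hx (mem_iUnion.2 ⟨R, h⟩)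
    rwa [mem_limsup_iff_frequently_mem, not_frequently] at this
  have hq : (0 : ℝ) < (1 / 2) ^ ε := by positivity
  have hq1 : (1 / 2 : ℝ) ^ ε < 1 := Real.rpow_lt_one (by norm_num) (by norm_num) hε
  refine eventually_nhdsGT_zero_of_eventually_Ioc_pow (q := 1 / 2) (by norm_num) (by norm_num)
    ((hxA.and (eventually_pow_le_inv_sq hq hq1)).mono fun k hk r hr => ?_)
  have hlow : c k * μ (closedBall x (ρ k / 2)) ≤ μ (closedBall x (ρ k) ∩ {y | φ y ≤ φ x}) :=
    not_lt.1 fun h => hk.1 ⟨mem_closedBall_zero_iff.2 hR, h⟩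
  have hrε : ENNReal.ofReal (r ^ ε) ≤ c k := by
    refine ENNReal.ofReal_le_ofReal ?_
    calc r ^ ε ≤ ((1 / 2 : ℝ) ^ k) ^ ε := Real.rpow_le_rpow ((hρ k).le.trans hr.1.le) hr.2 hε.le
      _ = ((1 / 2 : ℝ) ^ ε) ^ k := (Real.rpow_pow_comm (by norm_num) ε k).symm
      _ ≤ (((k : ℝ) + 1) ^ 2)⁻¹ := hk.2
  calc ENNReal.ofReal (r ^ ε) * μ (closedBall x (r / 4))
      ≤ c k * μ (closedBall x (ρ k / 2)) := by
        refine mul_le_mul' hrε (measure_mono (closedBall_subset_closedBall ?_))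
        have : r ≤ (1 / 2) ^ k := hr.2
        simp only [ρ, pow_succ]
        linarith
    _ ≤ μ (closedBall x (ρ k) ∩ {y | φ y ≤ φ x}) := hlow
    _ ≤ μ (closedBall x r ∩ {y | φ y ≤ φ x}) :=
        measure_mono (inter_subset_inter_left _ (closedBall_subset_closedBall hr.1.le))

end FiniteDimensional

theorem stmt_6 (n : ℕ) (μ : Measure (EuclideanSpace ℝ (Fin n)))
    (hfin : ∀ s : Set (EuclideanSpace ℝ (Fin n)), Bornology.IsBounded s → μ s < ⊤)
    (θ : EuclideanSpace ℝ (Fin n)) :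
    ∀ᵐ x ∂μ,
      limsup (fun r : ℝ =>
          Real.log (μ (closedBall x r \ {y | 0 < ⟪y - x, θ⟫})).toReal / Real.log r)
        (𝓝[>] 0)
        = limsup (fun r : ℝ => Real.log (μ (closedBall x r)).toReal / Real.log r)
            (𝓝[>] 0) ∧
      liminf (fun r : ℝ =>
          Real.log (μ (closedBall x r \ {y | 0 < ⟪y - x, θ⟫})).toReal / Real.log r)
        (𝓝[>] 0)
        = liminf (fun r : ℝ => Real.log (μ (closedBall x r)).toReal / Real.log r)
            (𝓝[>] 0) := by
  have : IsFiniteMeasureOnCompacts μ := ⟨fun K hK => hfin K hK.isBounded⟩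
  have hhalf : ∀ x r, closedBall x r \ {y | 0 < ⟪y - x, θ⟫} =
      closedBall x r ∩ {y | ⟪y, θ⟫ ≤ ⟪x, θ⟫} := fun x r => by
    ext y
    simp [inner_sub_left]
  filter_upwards [ae_eventually_rpow_mul_measure_closedBall_le μ
    (continuous_id.inner continuous_const), Measure.support_mem_ae] with x hx hsupp
  simp only [hhalf, Real.log_div_log]
  refine limsup_logb_eq_and_liminf_logb_eq_of_rpow_mul_le (c := 4⁻¹) (by norm_num) ?_
    (.of_forall fun r => ENNReal.toReal_mono measure_closedBall_lt_top.ne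
      (measure_mono inter_subset_left)) fun ε hε => ?_
  · filter_upwards [self_mem_nhdsWithin] with r (hr : 0 < r)
    exact ENNReal.toReal_pos ((Measure.mem_support_iff_forall x).1 hsupp _
      (closedBall_mem_nhds x hr)).ne' measure_closedBall_lt_top.ne
  · filter_upwards [hx ε hε, self_mem_nhdsWithin] with r hr (hr0 : 0 < r)
    have := ENNReal.toReal_mono (measure_lt_top_of_subset inter_subset_left
      measure_closedBall_lt_top.ne).ne hr
    rwa [ENNReal.toReal_mul, ENNReal.toReal_ofReal (Real.rpow_nonneg hr0.le ε),
      div_eq_inv_mul] at this
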